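/- arXiv:1211.5562 — 4 statements merged into one kernel-verified Lean document; each statement's English description precedes it below -/
import Mathlib

section
/- Let X₁, X₂, … be i.i.d. with mean μ > 0 and Sₙ = X₁+…+Xₙ, and N(γ) = inf{n ≥ 1 : Sₙ ≥ γ}. Then E[N(γ)]/γ → 1/μ as γ → ∞. -/
/-!
Let `Bₖ` (`stayBelow X γ k`) be the event that the walk stays below `γ` up to time `k`. By the
strong law the level is reached almost surely, so `Bₖ = {N > k}` up to a null set and
`E N = ∑ P(Bₖ)`. The event `Bₖ` is determined by `X₀, …, Xₖ₋₁`, hence independent of `Xₖ`, which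
gives Wald's identity `E[S_N] = m E[N]` as soon as `E N < ∞`; since `S_N ≥ γ` this yields
`γ ≤ m E N`.

Conversely, if the steps are bounded above by `c` then `S_{N ∧ n} ≤ γ + c`, and the truncated Wald
identity gives `m E N ≤ γ + c`. Truncating the steps at `c` only delays the passage, so in general
`E N ≤ (γ + c) / E[min(X, c)]`, and `E[min(X, c)] → m` as `c → ∞`.
-/

open MeasureTheory ProbabilityTheory Filter Set
open scoped ENNReal Topology

theorem MeasureTheory.integrable_tsum_of_tsum_lintegral_enorm_ne_top {α E ι : Type*}
    [MeasurableSpace α] {μ : Measure α} [NormedAddCommGroup E] [CompleteSpace E] [Countable ι]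
    {f : ι → α → E} (hf : ∀ i, AEStronglyMeasurable (f i) μ)
    (hf' : ∑' i, ∫⁻ a, ‖f i a‖ₑ ∂μ ≠ ∞) :
    Integrable (fun a => ∑' i, f i a) μ := by
  refine ⟨AEStronglyMeasurable.tsum hf, ?_⟩
  rw [hasFiniteIntegral_iff_enorm]
  calc ∫⁻ a, ‖∑' i, f i a‖ₑ ∂μ ≤ ∫⁻ a, ∑' i, ‖f i a‖ₑ ∂μ :=
        lintegral_mono fun a => enorm_tsum_le_tsum_enorm
    _ = ∑' i, ∫⁻ a, ‖f i a‖ₑ ∂μ := lintegral_tsum fun i => (hf i).enorm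
    _ < ∞ := hf'.lt_top

theorem MeasureTheory.tendsto_integral_min_natCast_atTop {α : Type*} [MeasurableSpace α]
    {μ : Measure α} [IsFiniteMeasure μ] {f : α → ℝ} (hf : Integrable f μ) :
    Tendsto (fun c : ℕ => ∫ x, min (f x) c ∂μ) atTop (𝓝 (∫ x, f x ∂μ)) := by
  refine tendsto_integral_of_dominated_convergence (fun x => |f x|)
    (fun c => (hf.inf (integrable_const (c : ℝ))).aestronglyMeasurable) hf.abs
    (fun c => ae_of_all _ fun x => ?_) (ae_of_all _ fun x => ?_)
  · rw [Real.norm_eq_abs]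
    rcases le_total (f x) c with h | h
    · rw [min_eq_left h]
    · rw [min_eq_right h, abs_of_nonneg c.cast_nonneg]
      exact h.trans (le_abs_self _)
  · exact tendsto_const_nhds.congr' <| (tendsto_natCast_atTop_atTop.eventually_ge_atTop (f x)).mono
      fun c hc => (min_eq_left hc).symm

namespace FirstPassage

variable {Ω : Type*} {X : ℕ → Ω → ℝ} {γ : ℝ} {ω : Ω}

noncomputable def firstPassage (X : ℕ → Ω → ℝ) (γ : ℝ) (ω : Ω) : ℕ :=
  sInf {n : ℕ | 1 ≤ n ∧ γ ≤ ∑ i ∈ Finset.range n, X i ω}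

def stayBelow (X : ℕ → Ω → ℝ) (γ : ℝ) (k : ℕ) : Set Ω :=
  {ω | ∀ j, 1 ≤ j → j ≤ k → ∑ i ∈ Finset.range j, X i ω < γ}

lemma sum_range_lt_of_lt_firstPassage {j : ℕ} (hj : 1 ≤ j) (hjN : j < firstPassage X γ ω) :
    ∑ i ∈ Finset.range j, X i ω < γ :=
  not_le.mp fun h => Nat.notMem_of_lt_sInf hjN ⟨hj, h⟩

lemma mem_stayBelow_of_lt_firstPassage {k : ℕ} (hk : k < firstPassage X γ ω) :
    ω ∈ stayBelow X γ k :=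
  fun _ hj hjk => sum_range_lt_of_lt_firstPassage hj (hjk.trans_lt hk)

lemma sum_range_le_of_le_firstPassage {c : ℝ} (hγ : 0 ≤ γ) (hc : 0 ≤ c) (hX : ∀ i, X i ω ≤ c)
    {j : ℕ} (hj : j ≤ firstPassage X γ ω) : ∑ i ∈ Finset.range j, X i ω ≤ γ + c := by
  obtain _ | j := j
  · simpa using add_nonneg hγ hc
  have hprev : ∑ i ∈ Finset.range j, X i ω ≤ γ := by
    obtain _ | j' := j
    · simpa using hγ
    exact (sum_range_lt_of_lt_firstPassage (Nat.le_add_left 1 j') (by omega)).le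
  rw [Finset.sum_range_succ]
  linarith [hX j]

lemma firstPassage_le_of_le {Y : ℕ → Ω → ℝ} (hYX : ∀ i, Y i ω ≤ X i ω)
    (hY : ∃ n, 1 ≤ n ∧ γ ≤ ∑ i ∈ Finset.range n, Y i ω) :
    firstPassage X γ ω ≤ firstPassage Y γ ω := by
  obtain ⟨h1, hγ⟩ := Nat.sInf_mem hY
  exact Nat.sInf_le ⟨h1, hγ.trans (Finset.sum_le_sum fun i _ => hYX i)⟩

section Reached

variable (hω : ∃ n, 1 ≤ n ∧ γ ≤ ∑ i ∈ Finset.range n, X i ω)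
include hω

lemma le_sum_range_firstPassage : γ ≤ ∑ i ∈ Finset.range (firstPassage X γ ω), X i ω :=
  (Nat.sInf_mem hω).2

lemma lt_firstPassage_iff_mem_stayBelow {k : ℕ} :
    k < firstPassage X γ ω ↔ ω ∈ stayBelow X γ k := by
  refine ⟨mem_stayBelow_of_lt_firstPassage, fun hk => not_le.mp fun hNk => ?_⟩
  obtain ⟨h1, hγ⟩ := Nat.sInf_mem hω
  exact (hk _ h1 hNk).not_ge hγ

lemma sum_range_indicator_stayBelow {M : Type*} [AddCommMonoid M] (f : ℕ → Ω → M) (n : ℕ) :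
    ∑ k ∈ Finset.range n, (stayBelow X γ k).indicator (f k) ω =
      ∑ k ∈ Finset.range (min n (firstPassage X γ ω)), f k ω := by
  simp only [indicator, ← lt_firstPassage_iff_mem_stayBelow hω, ← Finset.sum_filter]
  congr 1
  ext k
  simp only [Finset.mem_filter, Finset.mem_range]
  omega

lemma tsum_indicator_stayBelow {M : Type*} [AddCommMonoid M] [TopologicalSpace M]
    (f : ℕ → Ω → M) :
    ∑' k, (stayBelow X γ k).indicator (f k) ω =
      ∑ k ∈ Finset.range (firstPassage X γ ω), f k ω := by
  rw [tsum_eq_sum (s := Finset.range (firstPassage X γ ω)) fun k hk => indicator_of_notMem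
    (fun h => hk (Finset.mem_range.mpr ((lt_firstPassage_iff_mem_stayBelow hω).mpr h))) _,
    sum_range_indicator_stayBelow hω, min_self]

end Reached

section Independence

lemma measurableSet_stayBelow_past (k : ℕ) :
    MeasurableSet[⨆ i ∈ Iio k, MeasurableSpace.comap (X i) inferInstance] (stayBelow X γ k) := by
  have hsum : ∀ j ≤ k, Measurable[⨆ i ∈ Iio k, MeasurableSpace.comap (X i) inferInstance]
      fun ω => ∑ i ∈ Finset.range j, X i ω := fun j hj =>
    Finset.measurable_sum _ fun i hi => (comap_measurable (X i)).mono
      (le_iSup₂ (f := fun i (_ : i ∈ Iio k) => MeasurableSpace.comap (X i) inferInstance) i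
        (lt_of_lt_of_le (Finset.mem_range.mp hi) hj)) le_rfl
  simp only [stayBelow, ofPred_forall]
  exact MeasurableSet.iInter fun j => MeasurableSet.iInter fun _ => MeasurableSet.iInter fun hj =>
    measurableSet_lt (hsum j hj) measurable_const

variable [MeasurableSpace Ω] {μ : Measure Ω}

lemma measurableSet_stayBelow (hmeas : ∀ i, Measurable (X i)) (k : ℕ) :
    MeasurableSet (stayBelow X γ k) :=
  (iSup₂_le fun i _ => (hmeas i).comap_le) _ (measurableSet_stayBelow_past k)

lemma setIntegral_stayBelow (hmeas : ∀ i, Measurable (X i)) (hindep : iIndepFun X μ)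
    (hident : ∀ i, IdentDistrib (X i) (X 0) μ μ) {f : ℝ → ℝ} (hf : Measurable f) (k : ℕ) :
    ∫ ω in stayBelow X γ k, f (X k ω) ∂μ = μ.real (stayBelow X γ k) * ∫ ω, f (X 0 ω) ∂μ := by
  have hindep_past := indep_iSup_of_disjoint (fun i => (hmeas i).comap_le) hindep.iIndep
    (Set.disjoint_singleton_right.mpr (lt_irrefl k) : Disjoint (Iio k) {k})
  rw [iSup_singleton] at hindep_past
  rw [hindep_past.setIntegral_eq_mul (iSup₂_le fun i _ => (hmeas i).comap_le)
    (hmeas k).aemeasurable (measurableSet_stayBelow_past k) hf.aestronglyMeasurable]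
  exact congrArg _ ((hident k).comp hf).integral_eq

end Independence

section IID

variable [MeasurableSpace Ω] {μ : Measure Ω}

lemma ae_exists_le_sum_range (hindep : iIndepFun X μ)
    (hident : ∀ i, IdentDistrib (X i) (X 0) μ μ) (hint : Integrable (X 0) μ)
    (hm : 0 < ∫ ω, X 0 ω ∂μ) (γ : ℝ) :
    ∀ᵐ ω ∂μ, ∃ n, 1 ≤ n ∧ γ ≤ ∑ i ∈ Finset.range n, X i ω := by
  filter_upwards [strong_law_ae_real X hint (fun i j hij => hindep.indepFun hij) hident]
    with ω hω
  have hS : Tendsto (fun n : ℕ => (∑ i ∈ Finset.range n, X i ω) / n * n) atTop atTop :=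
    hω.pos_mul_atTop hm tendsto_natCast_atTop_atTop
  obtain ⟨n, hn⟩ := ((hS.eventually_ge_atTop γ).and (eventually_ge_atTop 1)).exists
  refine ⟨n, hn.2, ?_⟩
  have : (n : ℝ) ≠ 0 := Nat.cast_ne_zero.mpr (by omega)
  simpa [this] using hn.1

lemma firstPassage_ae_eq_tsum (hindep : iIndepFun X μ)
    (hident : ∀ i, IdentDistrib (X i) (X 0) μ μ) (hint : Integrable (X 0) μ)
    (hm : 0 < ∫ ω, X 0 ω ∂μ) (γ : ℝ) :
    (fun ω => (firstPassage X γ ω : ℝ≥0∞)) =ᵐ[μ]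
      fun ω => ∑' k, (stayBelow X γ k).indicator 1 ω := by
  filter_upwards [ae_exists_le_sum_range hindep hident hint hm γ] with ω hω
  rw [tsum_indicator_stayBelow hω]
  simp

lemma lintegral_firstPassage (hmeas : ∀ i, Measurable (X i)) (hindep : iIndepFun X μ)
    (hident : ∀ i, IdentDistrib (X i) (X 0) μ μ) (hint : Integrable (X 0) μ)
    (hm : 0 < ∫ ω, X 0 ω ∂μ) (γ : ℝ) :
    ∫⁻ ω, (firstPassage X γ ω : ℝ≥0∞) ∂μ = ∑' k, μ (stayBelow X γ k) := by
  rw [lintegral_congr_ae (firstPassage_ae_eq_tsum hindep hident hint hm γ),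
    lintegral_tsum fun k =>
      (measurable_one.indicator (measurableSet_stayBelow hmeas k)).aemeasurable]
  exact tsum_congr fun k => lintegral_indicator_one (measurableSet_stayBelow hmeas k)

lemma integral_firstPassage (hmeas : ∀ i, Measurable (X i)) (hindep : iIndepFun X μ)
    (hident : ∀ i, IdentDistrib (X i) (X 0) μ μ) (hint : Integrable (X 0) μ)
    (hm : 0 < ∫ ω, X 0 ω ∂μ) (γ : ℝ) :
    ∫ ω, (firstPassage X γ ω : ℝ) ∂μ = (∫⁻ ω, (firstPassage X γ ω : ℝ≥0∞) ∂μ).toReal := by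
  have hN : AEMeasurable (fun ω => (firstPassage X γ ω : ℝ≥0∞)) μ :=
    ⟨_, Measurable.tsum fun k =>
      measurable_one.indicator (measurableSet_stayBelow hmeas k),
      firstPassage_ae_eq_tsum hindep hident hint hm γ⟩
  rw [← integral_toReal hN (ae_of_all _ fun ω => ENNReal.natCast_lt_top _)]
  simp

lemma integral_sum_range_indicator_stayBelow (hmeas : ∀ i, Measurable (X i))
    (hindep : iIndepFun X μ) (hident : ∀ i, IdentDistrib (X i) (X 0) μ μ)
    (hint : Integrable (X 0) μ) (n : ℕ) :
    ∫ ω, ∑ k ∈ Finset.range n, (stayBelow X γ k).indicator (X k) ω ∂μ =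
      (∑ k ∈ Finset.range n, μ.real (stayBelow X γ k)) * ∫ ω, X 0 ω ∂μ := by
  rw [integral_finsetSum _ fun k _ => (((hident k).integrable_iff.mpr hint).indicator
    (measurableSet_stayBelow hmeas k)), Finset.sum_mul]
  refine Finset.sum_congr rfl fun k _ => ?_
  rw [integral_indicator (measurableSet_stayBelow hmeas k)]
  exact setIntegral_stayBelow hmeas hindep hident measurable_id k

lemma lintegral_firstPassage_le_of_le [IsProbabilityMeasure μ] (hmeas : ∀ i, Measurable (X i))
    (hindep : iIndepFun X μ) (hident : ∀ i, IdentDistrib (X i) (X 0) μ μ)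
    (hint : Integrable (X 0) μ) (hm : 0 < ∫ ω, X 0 ω ∂μ) {c : ℝ} (hγ : 0 ≤ γ) (hc : 0 ≤ c)
    (hX : ∀ i ω, X i ω ≤ c) :
    ∫⁻ ω, (firstPassage X γ ω : ℝ≥0∞) ∂μ ≤ ENNReal.ofReal ((γ + c) / ∫ ω, X 0 ω ∂μ) := by
  rw [lintegral_firstPassage hmeas hindep hident hint hm, ENNReal.tsum_eq_iSup_nat]
  refine iSup_le fun n => ?_
  have hstopped : ∫ ω, ∑ k ∈ Finset.range n, (stayBelow X γ k).indicator (X k) ω ∂μ ≤ γ + c := by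
    refine (integral_mono_ae (integrable_finsetSum _ fun k _ => ((hident k).integrable_iff.mpr
      hint).indicator (measurableSet_stayBelow hmeas k)) (integrable_const (γ + c)) ?_).trans_eq
      (by simp)
    filter_upwards [ae_exists_le_sum_range hindep hident hint hm γ] with ω hω
    rw [sum_range_indicator_stayBelow hω]
    exact sum_range_le_of_le_firstPassage hγ hc (hX · ω) (min_le_right _ _)
  rw [integral_sum_range_indicator_stayBelow hmeas hindep hident hint, ← le_div_iff₀ hm] at hstopped
  rw [ENNReal.le_ofReal_iff_toReal_le (ENNReal.sum_ne_top.mpr fun k _ => measure_ne_top μ _)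
    (by positivity), ENNReal.toReal_sum fun k _ => measure_ne_top μ _]
  exact hstopped

lemma lintegral_firstPassage_le [IsProbabilityMeasure μ] (hmeas : ∀ i, Measurable (X i))
    (hindep : iIndepFun X μ) (hident : ∀ i, IdentDistrib (X i) (X 0) μ μ)
    (hint : Integrable (X 0) μ) {c : ℝ} (hγ : 0 ≤ γ) (hc : 0 ≤ c)
    (hmc : 0 < ∫ ω, min (X 0 ω) c ∂μ) :
    ∫⁻ ω, (firstPassage X γ ω : ℝ≥0∞) ∂μ ≤
      ENNReal.ofReal ((γ + c) / ∫ ω, min (X 0 ω) c ∂μ) := by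
  set Y : ℕ → Ω → ℝ := fun i ω => min (X i ω) c
  have hYmeas : ∀ i, Measurable (Y i) := fun i => (hmeas i).min measurable_const
  have hYindep : iIndepFun Y μ :=
    hindep.comp (fun _ x => min x c) fun _ => measurable_id.min measurable_const
  have hYident : ∀ i, IdentDistrib (Y i) (Y 0) μ μ :=
    fun i => (hident i).comp (measurable_id.min measurable_const)
  have hYint : Integrable (Y 0) μ := hint.inf (integrable_const c)
  refine le_trans (lintegral_mono_ae ?_) (lintegral_firstPassage_le_of_le hYmeas hYindep hYident
    hYint hmc hγ hc fun i ω => min_le_right _ _)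
  filter_upwards [ae_exists_le_sum_range hYindep hYident hYint hmc γ] with ω hω
  exact Nat.cast_le.mpr (firstPassage_le_of_le (fun i => min_le_left _ _) hω)

lemma lintegral_firstPassage_lt_top [IsProbabilityMeasure μ] (hmeas : ∀ i, Measurable (X i))
    (hindep : iIndepFun X μ) (hident : ∀ i, IdentDistrib (X i) (X 0) μ μ)
    (hint : Integrable (X 0) μ) (hm : 0 < ∫ ω, X 0 ω ∂μ) (hγ : 0 ≤ γ) :
    ∫⁻ ω, (firstPassage X γ ω : ℝ≥0∞) ∂μ < ∞ := by
  obtain ⟨c, hc⟩ :=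
    ((tendsto_integral_min_natCast_atTop hint).eventually (eventually_gt_nhds hm)).exists
  exact (lintegral_firstPassage_le hmeas hindep hident hint hγ c.cast_nonneg hc).trans_lt
    ENNReal.ofReal_lt_top

lemma integral_firstPassage_le [IsProbabilityMeasure μ] (hmeas : ∀ i, Measurable (X i))
    (hindep : iIndepFun X μ) (hident : ∀ i, IdentDistrib (X i) (X 0) μ μ)
    (hint : Integrable (X 0) μ) (hm : 0 < ∫ ω, X 0 ω ∂μ) {c : ℝ} (hγ : 0 ≤ γ) (hc : 0 ≤ c)
    (hmc : 0 < ∫ ω, min (X 0 ω) c ∂μ) :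
    ∫ ω, (firstPassage X γ ω : ℝ) ∂μ ≤ (γ + c) / ∫ ω, min (X 0 ω) c ∂μ := by
  rw [integral_firstPassage hmeas hindep hident hint hm]
  exact ENNReal.toReal_le_of_le_ofReal (by positivity)
    (lintegral_firstPassage_le hmeas hindep hident hint hγ hc hmc)

lemma tsum_lintegral_enorm_indicator_stayBelow [IsFiniteMeasure μ] (hmeas : ∀ i, Measurable (X i))
    (hindep : iIndepFun X μ) (hident : ∀ i, IdentDistrib (X i) (X 0) μ μ)
    (hint : Integrable (X 0) μ) :
    ∑' k, ∫⁻ ω, ‖(stayBelow X γ k).indicator (X k) ω‖ₑ ∂μ =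
      (∑' k, μ (stayBelow X γ k)) * ENNReal.ofReal (∫ ω, ‖X 0 ω‖ ∂μ) := by
  rw [← ENNReal.tsum_mul_right]
  refine tsum_congr fun k => ?_
  have hB := measurableSet_stayBelow (γ := γ) hmeas k
  rw [← ofReal_integral_norm_eq_lintegral_enorm
    (((hident k).integrable_iff.mpr hint).indicator hB)]
  simp_rw [norm_indicator_eq_indicator_norm]
  rw [integral_indicator hB, setIntegral_stayBelow hmeas hindep hident measurable_norm,
    ENNReal.ofReal_mul measureReal_nonneg, ofReal_measureReal (measure_ne_top μ _)]

lemma sum_range_firstPassage_ae_eq_tsum (hindep : iIndepFun X μ)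
    (hident : ∀ i, IdentDistrib (X i) (X 0) μ μ) (hint : Integrable (X 0) μ)
    (hm : 0 < ∫ ω, X 0 ω ∂μ) (γ : ℝ) :
    (fun ω => ∑ i ∈ Finset.range (firstPassage X γ ω), X i ω) =ᵐ[μ]
      fun ω => ∑' k, (stayBelow X γ k).indicator (X k) ω := by
  filter_upwards [ae_exists_le_sum_range hindep hident hint hm γ] with ω hω
  exact (tsum_indicator_stayBelow hω X).symm

section Wald

variable [IsFiniteMeasure μ] (hmeas : ∀ i, Measurable (X i)) (hindep : iIndepFun X μ)
  (hident : ∀ i, IdentDistrib (X i) (X 0) μ μ) (hint : Integrable (X 0) μ)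
  (hm : 0 < ∫ ω, X 0 ω ∂μ) (hfin : ∫⁻ ω, (firstPassage X γ ω : ℝ≥0∞) ∂μ ≠ ∞)
include hmeas hindep hident hint hm hfin

lemma integrable_sum_range_firstPassage :
    Integrable (fun ω => ∑ i ∈ Finset.range (firstPassage X γ ω), X i ω) μ := by
  refine (integrable_tsum_of_tsum_lintegral_enorm_ne_top (fun k => ((hmeas k).indicator
    (measurableSet_stayBelow hmeas k)).aestronglyMeasurable) ?_).congr
    (sum_range_firstPassage_ae_eq_tsum hindep hident hint hm γ).symm
  rw [tsum_lintegral_enorm_indicator_stayBelow hmeas hindep hident hint,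
    ← lintegral_firstPassage hmeas hindep hident hint hm]
  exact ENNReal.mul_ne_top hfin ENNReal.ofReal_ne_top

lemma integral_sum_range_firstPassage :
    ∫ ω, ∑ i ∈ Finset.range (firstPassage X γ ω), X i ω ∂μ =
      (∫ ω, X 0 ω ∂μ) * ∫ ω, (firstPassage X γ ω : ℝ) ∂μ := by
  have hfin' : ∑' k, μ (stayBelow X γ k) ≠ ∞ := by
    rwa [← lintegral_firstPassage hmeas hindep hident hint hm]
  rw [integral_congr_ae (sum_range_firstPassage_ae_eq_tsum hindep hident hint hm γ),
    integral_tsum (fun k => ((hmeas k).indicator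
      (measurableSet_stayBelow hmeas k)).aestronglyMeasurable)
      (by rw [tsum_lintegral_enorm_indicator_stayBelow hmeas hindep hident hint]
          exact ENNReal.mul_ne_top hfin' ENNReal.ofReal_ne_top),
    integral_firstPassage hmeas hindep hident hint hm,
    lintegral_firstPassage hmeas hindep hident hint hm,
    ENNReal.tsum_toReal_eq fun k => measure_ne_top μ _, mul_comm, ← tsum_mul_right]
  refine tsum_congr fun k => ?_
  rw [integral_indicator (measurableSet_stayBelow hmeas k)]
  exact setIntegral_stayBelow hmeas hindep hident measurable_id k

end Wald

lemma le_mul_integral_firstPassage [IsProbabilityMeasure μ] (hmeas : ∀ i, Measurable (X i))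
    (hindep : iIndepFun X μ) (hident : ∀ i, IdentDistrib (X i) (X 0) μ μ)
    (hint : Integrable (X 0) μ) (hm : 0 < ∫ ω, X 0 ω ∂μ) (hγ : 0 ≤ γ) :
    γ ≤ (∫ ω, X 0 ω ∂μ) * ∫ ω, (firstPassage X γ ω : ℝ) ∂μ := by
  have hfin := (lintegral_firstPassage_lt_top hmeas hindep hident hint hm hγ).ne
  rw [← integral_sum_range_firstPassage hmeas hindep hident hint hm hfin]
  calc γ = ∫ _, γ ∂μ := by simp
    _ ≤ _ := integral_mono_ae (integrable_const γ)
        (integrable_sum_range_firstPassage hmeas hindep hident hint hm hfin)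
        ((ae_exists_le_sum_range hindep hident hint hm γ).mono fun ω => le_sum_range_firstPassage)

end IID
end FirstPassage

open FirstPassage in
/-- L¹ law for first passage times: for an i.i.d. random walk with mean `m > 0`
and `N(γ) = inf{n ≥ 1 : Sₙ ≥ γ}`, one has `E[N(γ)]/γ → 1/m` as `γ → ∞`. -/
theorem first_passage_time_expectation_lln
    {Ω : Type*} [MeasurableSpace Ω] (μ : Measure Ω) [IsProbabilityMeasure μ]
    (X : ℕ → Ω → ℝ) (hmeas : ∀ i, Measurable (X i))
    (hindep : iIndepFun X μ)
    (hident : ∀ i, IdentDistrib (X i) (X 0) μ μ)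
    (hint : Integrable (X 0) μ) (m : ℝ) (hm : 0 < m) (hmean : ∫ ω, X 0 ω ∂μ = m)
    (N : ℝ → Ω → ℕ)
    (hN : ∀ γ ω, N γ ω = sInf {n : ℕ | 1 ≤ n ∧ γ ≤ ∑ i ∈ Finset.range n, X i ω}) :
    Tendsto (fun γ : ℝ => (∫ ω, (N γ ω : ℝ) ∂μ) / γ) atTop (nhds (1 / m)) := by
  obtain rfl : N = firstPassage X := funext fun γ => funext (hN γ)
  subst hmean
  refine tendsto_order.2 ⟨fun a ha => ?_, fun a ha => ?_⟩
  · filter_upwards [eventually_gt_atTop 0] with γ hγ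
    refine ha.trans_le ?_
    rw [le_div_iff₀ hγ, one_div_mul_eq_div, div_le_iff₀ hm, mul_comm]
    exact le_mul_integral_firstPassage hmeas hindep hident hint hm hγ.le
  · set mc := fun c : ℕ => ∫ ω, min (X 0 ω) c ∂μ
    have hlim : Tendsto mc atTop (𝓝 (∫ ω, X 0 ω ∂μ)) := tendsto_integral_min_natCast_atTop hint
    obtain ⟨c, hc, hca⟩ := ((hlim.eventually (eventually_gt_nhds hm)).and
      ((tendsto_const_nhds.div hlim hm.ne').eventually (eventually_lt_nhds ha))).exists
    have hbound : Tendsto (fun γ : ℝ => (γ + c) / mc c / γ) atTop (𝓝 (1 / mc c)) := by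
      have := (tendsto_inv_atTop_zero.const_mul ((c : ℝ) / mc c)).const_add (1 / mc c)
      rw [mul_zero, add_zero] at this
      refine this.congr' ((eventually_ne_atTop 0).mono fun γ hγ => ?_)
      field_simp
    filter_upwards [hbound.eventually (eventually_lt_nhds hca), eventually_gt_atTop 0]
      with γ hlt hγ
    exact (div_le_div_of_nonneg_right (integral_firstPassage_le hmeas hindep hident hint hm
      hγ.le c.cast_nonneg hc) hγ.le).trans_lt hlt
end

section
/- Let W be a random walk with i.i.d. increments of negative mean δ < 0, W₀ = 0, and for γ > 0 define the last exit time τ(γ) = sup{n ≥ 1 : Wₙ ≥ −γ} (with sup ∅ = 0). Then τ(γ) < ∞ almost surely and τ(γ)/γ → −1/δ almost surely as γ → ∞. -/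
/-!
By the strong law of large numbers `Wₙ / n → δ` almost surely, so it suffices to treat a fixed
real sequence `w` with `w n / n → δ < 0`. Then `w n → -∞`, so only finitely many `n` have
`w n ≥ -γ`, and the last such time `L(γ)` tends to infinity with `γ`. Since `w (L + 1) < -γ ≤ w L`,
the ratio `γ / L` is squeezed between `-w L / L` and `-w (L + 1) / L`, both of which tend to `-δ`.
-/

open MeasureTheory ProbabilityTheory Filter Set Topology

/-- As `sSup` on `ℕ` is `0` on empty and on unbounded sets, this is the last exit time only once
the set is known to be finite. -/
noncomputable def lastExit (w : ℕ → ℝ) (γ : ℝ) : ℕ :=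
  sSup {n : ℕ | 1 ≤ n ∧ -γ ≤ w n}

section LastExit

variable {w : ℕ → ℝ} {δ γ : ℝ}

lemma tendsto_atBot_of_tendsto_div_natCast (hδ : δ < 0)
    (hw : Tendsto (fun n : ℕ => w n / n) atTop (𝓝 δ)) : Tendsto w atTop atBot := by
  refine (hw.neg_mul_atTop hδ tendsto_natCast_atTop_atTop).congr' ?_
  filter_upwards [eventually_ne_atTop 0] with n hn
  field_simp

lemma tendsto_succ_div_natCast (hw : Tendsto (fun n : ℕ => w n / n) atTop (𝓝 δ)) :
    Tendsto (fun n : ℕ => w (n + 1) / n) atTop (𝓝 δ) := by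
  have hshift : Tendsto (fun n : ℕ => w (n + 1) / (n + 1 : ℕ)) atTop (𝓝 δ) :=
    hw.comp (tendsto_add_atTop_nat 1)
  have hratio : Tendsto (fun n : ℕ => 1 + 1 / (n : ℝ)) atTop (𝓝 1) := by
    simpa using tendsto_one_div_atTop_nhds_zero_nat.const_add (1 : ℝ)
  refine (mul_one δ ▸ hshift.mul hratio).congr' ?_
  filter_upwards [eventually_ne_atTop 0] with n hn
  push_cast
  field_simp

lemma finite_setOf_le_of_tendsto_atBot (hw : Tendsto w atTop atBot) (γ : ℝ) :
    {n : ℕ | 1 ≤ n ∧ -γ ≤ w n}.Finite := by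
  have hlt : ∀ᶠ n in cofinite, w n < -γ := by
    rw [Nat.cofinite_eq_atTop]
    exact hw.eventually (eventually_lt_atBot (-γ))
  exact (eventually_cofinite.mp hlt).subset fun n hn => not_lt.mpr hn.2

lemma le_lastExit (hw : Tendsto w atTop atBot) {n : ℕ} (hn : 1 ≤ n) (hγ : -γ ≤ w n) :
    n ≤ lastExit w γ :=
  le_csSup (finite_setOf_le_of_tendsto_atBot hw γ).bddAbove ⟨hn, hγ⟩

lemma tendsto_lastExit_atTop (hw : Tendsto w atTop atBot) :
    Tendsto (lastExit w) atTop atTop := by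
  refine tendsto_atTop.2 fun m => ?_
  filter_upwards [eventually_ge_atTop (-w (max m 1))] with γ hγ
  exact (le_max_left m 1).trans (le_lastExit hw (le_max_right m 1) (by linarith))

lemma le_apply_lastExit (hw : Tendsto w atTop atBot) (h : 1 ≤ lastExit w γ) :
    -γ ≤ w (lastExit w γ) := by
  refine (Nat.sSup_mem ?_ (finite_setOf_le_of_tendsto_atBot hw γ).bddAbove).2
  by_contra hempty
  rw [not_nonempty_iff_eq_empty] at hempty
  simp [lastExit, hempty] at h

lemma lt_neg_of_lastExit_lt (hw : Tendsto w atTop atBot) {n : ℕ} (hn : lastExit w γ < n) :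
    w n < -γ := by
  by_contra! hle
  exact absurd (le_lastExit hw (by omega) hle) (not_le.mpr hn)

theorem tendsto_lastExit_div (hδ : δ < 0) (hw : Tendsto (fun n : ℕ => w n / n) atTop (𝓝 δ)) :
    Tendsto (fun γ : ℝ => (lastExit w γ : ℝ) / γ) atTop (𝓝 (-1 / δ)) := by
  have hbot := tendsto_atBot_of_tendsto_div_natCast hδ hw
  have hL := tendsto_lastExit_atTop hbot
  have hpos : ∀ᶠ γ in atTop, 1 ≤ lastExit w γ := hL.eventually (eventually_ge_atTop 1)
  have hlower : Tendsto (fun γ => -w (lastExit w γ) / lastExit w γ) atTop (𝓝 (-δ)) := by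
    simpa only [neg_div, Function.comp_def] using (hw.comp hL).neg
  have hupper : Tendsto (fun γ => -w (lastExit w γ + 1) / lastExit w γ) atTop (𝓝 (-δ)) := by
    simpa only [neg_div, Function.comp_def] using ((tendsto_succ_div_natCast hw).comp hL).neg
  have hratio : Tendsto (fun γ => γ / lastExit w γ) atTop (𝓝 (-δ)) := by
    refine tendsto_of_tendsto_of_tendsto_of_le_of_le' hlower hupper ?_ ?_
    · filter_upwards [hpos] with γ hγ
      have hlast := le_apply_lastExit hbot hγ
      gcongr
      linarith
    · filter_upwards with γ
      have hnext := lt_neg_of_lastExit_lt hbot (Nat.lt_succ_self (lastExit w γ))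
      gcongr
      linarith
  simpa only [inv_div, neg_div, one_div, inv_neg] using hratio.inv₀ (neg_ne_zero.mpr hδ.ne)

end LastExit

theorem last_exit_time_neg_drift_general
    {Ω : Type*} [MeasurableSpace Ω] (μ : Measure Ω)
    (X : ℕ → Ω → ℝ)
    (hindep : iIndepFun X μ)
    (hident : ∀ i, IdentDistrib (X i) (X 0) μ μ)
    (hint : Integrable (X 0) μ) (δ : ℝ) (hδ : δ < 0) (hmean : ∫ ω, X 0 ω ∂μ = δ)
    (τ : ℝ → Ω → ℕ)
    (hτ : ∀ γ ω, τ γ ω = sSup {n : ℕ | 1 ≤ n ∧ -γ ≤ ∑ i ∈ Finset.range n, X i ω}) :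
    ∀ᵐ ω ∂μ,
      (∀ γ : ℝ, 0 < γ → {n : ℕ | 1 ≤ n ∧ -γ ≤ ∑ i ∈ Finset.range n, X i ω}.Finite) ∧
      Tendsto (fun γ : ℝ => (τ γ ω : ℝ) / γ) atTop (nhds (-1 / δ)) := by
  have hslln := strong_law_ae_real X hint (fun i j hij => hindep.indepFun hij) hident
  filter_upwards [hslln] with ω hω
  rw [hmean] at hω
  refine ⟨fun γ _ => finite_setOf_le_of_tendsto_atBot
    (tendsto_atBot_of_tendsto_div_natCast hδ hω) γ, ?_⟩
  simp only [hτ]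
  exact tendsto_lastExit_div hδ hω

/-- Last exit time of a negative-drift random walk: with `τ(γ) = sup{n ≥ 1 : Wₙ ≥ −γ}`,
`τ(γ)` is finite a.s. (the set of such times is finite) and `τ(γ)/γ → −1/δ` a.s.
as `γ → ∞`, where `δ < 0` is the mean of the increments. -/
theorem last_exit_time_neg_drift
    {Ω : Type*} [MeasurableSpace Ω] (μ : Measure Ω) [IsProbabilityMeasure μ]
    (X : ℕ → Ω → ℝ) (hmeas : ∀ i, Measurable (X i))
    (hindep : iIndepFun X μ)
    (hident : ∀ i, IdentDistrib (X i) (X 0) μ μ)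
    (hint : Integrable (X 0) μ) (δ : ℝ) (hδ : δ < 0) (hmean : ∫ ω, X 0 ω ∂μ = δ)
    (τ : ℝ → Ω → ℕ)
    (hτ : ∀ γ ω, τ γ ω = sSup {n : ℕ | 1 ≤ n ∧ -γ ≤ ∑ i ∈ Finset.range n, X i ω}) :
    ∀ᵐ ω ∂μ,
      (∀ γ : ℝ, 0 < γ → {n : ℕ | 1 ≤ n ∧ -γ ≤ ∑ i ∈ Finset.range n, X i ω}.Finite) ∧
      Tendsto (fun γ : ℝ => (τ γ ω : ℝ) / γ) atTop (nhds (-1 / δ)) :=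
  last_exit_time_neg_drift_general μ X hindep hident hint δ hδ hmean τ hτ
end

section
/- Let W be a random walk with i.i.d. increments X_i having E[X_i] > 0, and suppose there exists s' > 0 with E[exp(−s' X_i)] = 1. Let T_a = inf{n ≥ 1 : Wₙ ≤ a} for a < 0. Then P(T_a < ∞) ≤ exp(s' a). -/
/-!
The products `Mₙ = ∏_{i ≤ n} exp(-s' Xᵢ) = exp(-s' Wₙ₊₁)` of independent mean-one factors form a
nonnegative martingale with `E M₀ = 1`. If the walk ever reaches level `a`, then some `Mₙ` is at
least `exp(-s' a)`, so Ville's maximal inequality bounds the probability of ruin by `exp(s' a)`.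
-/

open MeasureTheory ProbabilityTheory Set
open scoped NNReal ENNReal

namespace ProbabilityTheory

variable {Ω : Type*} [MeasurableSpace Ω] {μ : Measure Ω} {Y : ℕ → Ω → ℝ}

theorem iIndepFun.indepFun_succ_of_measurable_natural (hY : ∀ i, Measurable (Y i))
    (hind : iIndepFun Y μ) {n : ℕ} {g : Ω → ℝ}
    (hg : Measurable[Filtration.natural Y (fun i ↦ (hY i).stronglyMeasurable) n] g) :
    IndepFun g (Y (n + 1)) μ := by
  have hpast_future := indep_iSup_of_disjoint (fun i ↦ (hY i).comap_le) hind.iIndep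
    (S := Iic n) (T := {n + 1}) (by simp)
  rw [IndepFun_iff_Indep]
  simpa using indep_of_indep_of_le_left hpast_future hg.comap_le

theorem iIndepFun.martingale_prod_range_succ [IsFiniteMeasure μ] (hY : ∀ i, Measurable (Y i))
    (hind : iIndepFun Y μ) (hint : ∀ i, Integrable (Y i) μ) (hmean : ∀ i, μ[Y i] = 1) :
    Martingale (fun n ↦ ∏ i ∈ Finset.range (n + 1), Y i)
      (Filtration.natural Y fun i ↦ (hY i).stronglyMeasurable) μ := by
  set ℱ := Filtration.natural Y fun i ↦ (hY i).stronglyMeasurable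
  have hadapted : StronglyAdapted ℱ fun n ↦ ∏ i ∈ Finset.range (n + 1), Y i := fun n ↦
    Finset.stronglyMeasurable_prod _ fun i hi ↦ (Filtration.stronglyAdapted_natural _ i).mono
      (ℱ.mono (Nat.lt_succ_iff.mp (Finset.mem_range.mp hi)))
  have hindep_next (n : ℕ) {g : Ω → ℝ} (hg : Measurable[ℱ n] g) : IndepFun g (Y (n + 1)) μ :=
    hind.indepFun_succ_of_measurable_natural hY hg
  have hintegrable (n : ℕ) : Integrable (∏ i ∈ Finset.range (n + 1), Y i) μ := by
    induction n with
    | zero => simpa using hint 0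
    | succ n ih =>
      rw [Finset.prod_range_succ]
      exact (hindep_next n (hadapted n).measurable).integrable_mul ih (hint _)
  refine martingale_of_setIntegral_eq_succ hadapted hintegrable fun n s hs ↦ ?_
  set P := ∏ i ∈ Finset.range (n + 1), Y i
  have hPs : Measurable[ℱ n] (s.indicator P) := (hadapted n).measurable.indicator hs
  calc ∫ ω in s, P ω ∂μ
      = (∫ ω, s.indicator P ω ∂μ) * μ[Y (n + 1)] := by
        rw [hmean, mul_one, integral_indicator (ℱ.le n s hs)]
    _ = ∫ ω, (s.indicator P * Y (n + 1)) ω ∂μ :=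
        ((hindep_next n hPs).integral_mul_eq_mul_integral
          (hPs.mono (ℱ.le n) le_rfl).aestronglyMeasurable (hY _).aestronglyMeasurable).symm
    _ = ∫ ω in s, (P * Y (n + 1)) ω ∂μ := by
        rw [← integral_indicator (ℱ.le n s hs)]
        exact integral_congr_ae (.of_forall fun ω ↦ (indicator_mul_left s P _).symm)
    _ = ∫ ω in s, (∏ i ∈ Finset.range (n + 1 + 1), Y i) ω ∂μ := by
        rw [Finset.prod_range_succ]

end ProbabilityTheory

namespace MeasureTheory

variable {Ω : Type*} [MeasurableSpace Ω] {μ : Measure Ω} [IsFiniteMeasure μ]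
  {ℱ : Filtration ℕ ‹MeasurableSpace Ω›} {f : ℕ → Ω → ℝ}

theorem Martingale.mul_measure_exists_le_le (hf : Martingale f ℱ μ) (hnonneg : 0 ≤ f)
    (ε : ℝ≥0) : ε * μ {ω | ∃ n, ε ≤ f n ω} ≤ ENNReal.ofReal (μ[f 0]) := by
  have hunion : {ω | ∃ n, (ε : ℝ) ≤ f n ω} = ⋃ N, {ω | ∃ n ≤ N, ε ≤ f n ω} := by
    ext ω; simp only [mem_ofPred_eq, mem_iUnion]
    exact ⟨fun ⟨n, hn⟩ ↦ ⟨n, n, le_rfl, hn⟩, fun ⟨_, n, _, hn⟩ ↦ ⟨n, hn⟩⟩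
  have hmono : Monotone fun N ↦ {ω | ∃ n ≤ N, (ε : ℝ) ≤ f n ω} :=
    fun _ _ hNM _ ⟨n, hn, hεn⟩ ↦ ⟨n, hn.trans hNM, hεn⟩
  rw [hunion, hmono.measure_iUnion, ENNReal.mul_iSup]
  refine iSup_le fun N ↦ ?_
  calc ε * μ {ω | ∃ n ≤ N, (ε : ℝ) ≤ f n ω}
      ≤ ε * μ {ω | (ε : ℝ) ≤ (Finset.range (N + 1)).sup' Finset.nonempty_range_add_one
          fun k ↦ f k ω} := by
        gcongr with ω
        rintro ⟨n, hn, hεn⟩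
        exact hεn.trans (Finset.le_sup' (fun k ↦ f k ω) (Finset.mem_range_succ_iff.mpr hn))
    _ ≤ ENNReal.ofReal (∫ ω in {ω | (ε : ℝ) ≤ (Finset.range (N + 1)).sup'
          Finset.nonempty_range_add_one fun k ↦ f k ω}, f N ω ∂μ) :=
        maximal_ineq hf.submartingale hnonneg N
    _ ≤ ENNReal.ofReal (μ[f N]) :=
        ENNReal.ofReal_le_ofReal (setIntegral_le_integral (hf.integrable N) (.of_forall (hnonneg N)))
    _ = ENNReal.ofReal (μ[f 0]) := by
        rw [← setIntegral_univ, ← hf.setIntegral_eq N.zero_le MeasurableSet.univ, setIntegral_univ]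

theorem Martingale.mul_measureReal_exists_le_le (hf : Martingale f ℱ μ) (hnonneg : 0 ≤ f)
    {ε : ℝ} (hε : 0 ≤ ε) : ε * μ.real {ω | ∃ n, ε ≤ f n ω} ≤ μ[f 0] := by
  lift ε to ℝ≥0 using hε
  calc ε * μ.real {ω | ∃ n, ε ≤ f n ω}
      = ((ε : ℝ≥0∞) * μ {ω | ∃ n, ε ≤ f n ω}).toReal := by
        simp [measureReal_def, ENNReal.toReal_mul]
    _ ≤ (ENNReal.ofReal (μ[f 0])).toReal :=
        ENNReal.toReal_mono ENNReal.ofReal_ne_top (hf.mul_measure_exists_le_le hnonneg ε)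
    _ = μ[f 0] := ENNReal.toReal_ofReal (integral_nonneg (hnonneg 0))

end MeasureTheory

theorem pos_drift_ruin_probability_bound_general
    {Ω : Type*} [MeasurableSpace Ω] (μ : Measure Ω) [IsProbabilityMeasure μ]
    (X : ℕ → Ω → ℝ) (hmeas : ∀ i, Measurable (X i))
    (hindep : iIndepFun X μ)
    (hident : ∀ i, IdentDistrib (X i) (X 0) μ μ)
    (s' : ℝ) (hs' : 0 < s')
    (hmgf : ∫ ω, Real.exp (-s' * X 0 ω) ∂μ = 1)
    (a : ℝ) :
    (μ {ω | ∃ n, 1 ≤ n ∧ ∑ i ∈ Finset.range n, X i ω ≤ a}).toReal ≤ Real.exp (s' * a) := by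
  have hexp : Measurable fun x : ℝ ↦ Real.exp (-s' * x) := by fun_prop
  set Y : ℕ → Ω → ℝ := fun i ω ↦ Real.exp (-s' * X i ω)
  have hY_ident (i : ℕ) : IdentDistrib (Y i) (Y 0) μ μ := (hident i).comp hexp
  have hmean (i : ℕ) : μ[Y i] = 1 := (hY_ident i).integral_eq.trans hmgf
  have hint (i : ℕ) : Integrable (Y i) μ :=
    (hY_ident i).integrable_iff.mpr (.of_integral_ne_zero (by rw [hmean 0]; exact one_ne_zero))
  have hY_indep : iIndepFun Y μ := hindep.comp (fun _ x ↦ Real.exp (-s' * x)) fun _ ↦ hexp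
  have hY_meas (i : ℕ) : Measurable (Y i) := hexp.comp (hmeas i)
  have hM := hY_indep.martingale_prod_range_succ hY_meas hint hmean
  have hM_nonneg : 0 ≤ fun n ↦ ∏ i ∈ Finset.range (n + 1), Y i := fun n ω ↦ by
    dsimp only
    rw [Pi.zero_apply, Pi.zero_apply, Finset.prod_apply]
    exact Finset.prod_nonneg fun i _ ↦ (Real.exp_pos _).le
  have hville := hM.mul_measureReal_exists_le_le hM_nonneg (Real.exp_pos (-s' * a)).le
  rw [zero_add, Finset.prod_range_one, hmean] at hville
  have hruin_subset : {ω | ∃ n, 1 ≤ n ∧ ∑ i ∈ Finset.range n, X i ω ≤ a}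
      ⊆ {ω | ∃ n, Real.exp (-s' * a) ≤ (∏ i ∈ Finset.range (n + 1), Y i) ω} := by
    rintro ω ⟨n, hn, hWn⟩
    refine ⟨n - 1, ?_⟩
    rw [Nat.sub_add_cancel hn, Finset.prod_apply, ← Real.exp_sum, ← Finset.mul_sum]
    exact Real.exp_le_exp.mpr (mul_le_mul_of_nonpos_left hWn (neg_nonpos.mpr hs'.le))
  calc μ.real {ω | ∃ n, 1 ≤ n ∧ ∑ i ∈ Finset.range n, X i ω ≤ a}
      ≤ μ.real {ω | ∃ n, Real.exp (-s' * a) ≤ (∏ i ∈ Finset.range (n + 1), Y i) ω} :=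
        measureReal_mono hruin_subset
    _ ≤ 1 / Real.exp (-s' * a) := (le_div_iff₀' (Real.exp_pos _)).mpr hville
    _ = Real.exp (s' * a) := by rw [one_div, ← Real.exp_neg, neg_mul, neg_neg]

/-- Exponential bound on the ruin probability of a positive-drift random walk:
if `E[exp(−s' X₁)] = 1` with `s' > 0` and `E[X₁] > 0`, then for `a < 0` the
probability that the walk ever falls to level `a` or below is at most `exp(s' a)`. -/
theorem pos_drift_ruin_probability_bound
    {Ω : Type*} [MeasurableSpace Ω] (μ : Measure Ω) [IsProbabilityMeasure μ]
    (X : ℕ → Ω → ℝ) (hmeas : ∀ i, Measurable (X i))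
    (hindep : iIndepFun X μ)
    (hident : ∀ i, IdentDistrib (X i) (X 0) μ μ)
    (hint : Integrable (X 0) μ) (hmean : 0 < ∫ ω, X 0 ω ∂μ)
    (s' : ℝ) (hs' : 0 < s')
    (hmgf : ∫ ω, Real.exp (-s' * X 0 ω) ∂μ = 1)
    (a : ℝ) (ha : a < 0) :
    (μ {ω | ∃ n, 1 ≤ n ∧ ∑ i ∈ Finset.range n, X i ω ≤ a}).toReal ≤ Real.exp (s' * a) :=
  pos_drift_ruin_probability_bound_general μ X hmeas hindep hident s' hs' hmgf a
end

section
/- Let S be a random walk with i.i.d. increments with positive mean, and suppose the moment generating function of the increments is finite in a neighborhood of 0 and the increments have an exponentially decaying right tail. Let τ(c) be a random time with P(τ(c) > t) ≤ k₁ e^{−ηt} for all t, with η > 0. Then there exist constants k₂ > 0 and s(η) > 0 (given by s(η) = η/Λ⁻¹(η) for the Legendre transform Λ of the cumulant generating function, when η < Λ(ess sup of increments)) such that P(S_{τ(c)} > |log c|) ≤ k₂ exp(−s(η)|log c|) = k₂ c^{s(η)}. -/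
open MeasureTheory ProbabilityTheory Filter Set

/-!
Fix `t > 0` with `M = 𝔼 e^{t X₀} < ∞`, let `a = max (log M) 1` and `r = (t / (2a)) L` with
`L = |log c|`. On `{τ ≤ r}` the walk can only exceed `L` at some time `m ≤ r`, and by the Chernoff
bound `P(S_m ≥ L) ≤ e^{-tL} M^m ≤ e^{-tL/2}`; a union bound over these `⌊r⌋ + 1 ≤ tL/2 + 1` times
still decays like `e^{-tL/4}`. The event `{τ > r}` has probability at most `k₁ e^{-η r}`, so the
exponent `s = min (η t / (2a)) (t / 4)` works.
-/

lemma Real.add_one_mul_exp_neg_le (x : ℝ) : (x + 1) * Real.exp (-x) ≤ 2 * Real.exp (-(x / 2)) := by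
  have hx : x + 1 ≤ 2 * Real.exp (x / 2) := by linarith [Real.add_one_le_exp (x / 2)]
  calc (x + 1) * Real.exp (-x) ≤ 2 * Real.exp (x / 2) * Real.exp (-x) := by gcongr
    _ = 2 * Real.exp (-(x / 2)) := by rw [mul_assoc, ← Real.exp_add]; ring_nf

lemma Real.pow_le_exp_mul_of_log_le {M a : ℝ} (hM : 0 < M) (h : Real.log M ≤ a) (n : ℕ) :
    M ^ n ≤ Real.exp (n * a) := by
  rw [← Real.exp_log hM, ← Real.exp_nat_mul]
  gcongr

namespace ProbabilityTheory

variable {Ω : Type*} [MeasurableSpace Ω] {μ : Measure Ω}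

lemma measureReal_sum_range_ge_le_exp_mul_mgf_pow [IsFiniteMeasure μ] {X : ℕ → Ω → ℝ}
    (hmeas : ∀ i, Measurable (X i)) (hindep : iIndepFun X μ)
    (hident : ∀ i, IdentDistrib (X i) (X 0) μ μ) {t : ℝ} (ht : 0 ≤ t)
    (hint : Integrable (fun ω => Real.exp (t * X 0 ω)) μ) (L : ℝ) (n : ℕ) :
    μ.real {ω | L ≤ ∑ k ∈ Finset.range n, X k ω}
      ≤ Real.exp (-t * L) * mgf (X 0) μ t ^ n := by
  have hint_i (i : ℕ) : Integrable (fun ω => Real.exp (t * X i ω)) μ :=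
    ((hident i).comp (measurable_const_mul t).exp).integrable_iff.mpr hint
  have hmgf : mgf (∑ k ∈ Finset.range n, X k) μ t = mgf (X 0) μ t ^ n := by
    rw [hindep.mgf_sum hmeas, Finset.prod_eq_pow_card fun i _ =>
      mgf_congr_of_identDistrib (X i) (X 0) (hident i) t, Finset.card_range]
  simpa [hmgf, Finset.sum_apply] using measure_ge_le_exp_mul_mgf L ht
    (hindep.integrable_exp_mul_sum (s := Finset.range n) hmeas fun i _ => hint_i i)

lemma measureReal_lt_apply_random_time_le [IsFiniteMeasure μ] (S : ℕ → Ω → ℝ) (N : Ω → ℕ)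
    (L r : ℝ) :
    μ.real {ω | L < S (N ω) ω}
      ≤ μ.real {ω | r < N ω} + ∑ m ∈ Finset.range (⌊r⌋₊ + 1), μ.real {ω | L ≤ S m ω} := by
  have hsub : {ω | L < S (N ω) ω}
      ⊆ {ω | r < N ω} ∪ ⋃ m ∈ Finset.range (⌊r⌋₊ + 1), {ω | L ≤ S m ω} := by
    intro ω hω
    by_cases hN : r < N ω
    · exact Or.inl hN
    · refine Or.inr (mem_iUnion₂.mpr ⟨N ω, ?_, (hω.le : L ≤ S (N ω) ω)⟩)
      exact Finset.mem_range.mpr (Nat.lt_succ_of_le (Nat.le_floor (not_lt.mp hN)))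
  calc μ.real {ω | L < S (N ω) ω}
      ≤ μ.real ({ω | r < N ω} ∪ ⋃ m ∈ Finset.range (⌊r⌋₊ + 1), {ω | L ≤ S m ω}) :=
        measureReal_mono hsub
    _ ≤ _ := (measureReal_union_le _ _).trans (by gcongr; exact measureReal_biUnion_finset_le _ _)

lemma sum_measureReal_sum_range_ge_le [IsProbabilityMeasure μ] {X : ℕ → Ω → ℝ}
    (hmeas : ∀ i, Measurable (X i)) (hindep : iIndepFun X μ)
    (hident : ∀ i, IdentDistrib (X i) (X 0) μ μ) {t : ℝ} (ht : 0 ≤ t)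
    (hint : Integrable (fun ω => Real.exp (t * X 0 ω)) μ) {a : ℝ} (ha : 1 ≤ a)
    (hMa : Real.log (mgf (X 0) μ t) ≤ a) {L : ℝ} (hL : 0 ≤ L) :
    ∑ m ∈ Finset.range (⌊t / (2 * a) * L⌋₊ + 1), μ.real {ω | L ≤ ∑ k ∈ Finset.range m, X k ω}
      ≤ 2 * Real.exp (-(t / 4 * L)) := by
  set r := t / (2 * a) * L
  have hr : 0 ≤ r := by positivity
  have hra : r * a = t / 2 * L := by simp only [r]; field_simp
  have hr_le : r ≤ t / 2 * L :=
    mul_le_mul_of_nonneg_right (div_le_div_of_nonneg_left ht two_pos (by linarith)) hL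
  have hterm : ∀ m ∈ Finset.range (⌊r⌋₊ + 1),
      μ.real {ω | L ≤ ∑ k ∈ Finset.range m, X k ω} ≤ Real.exp (-(t / 2 * L)) := by
    intro m hm
    have hmr : (m : ℝ) ≤ r :=
      (Nat.cast_le.mpr (Nat.lt_succ_iff.mp (Finset.mem_range.mp hm))).trans (Nat.floor_le hr)
    calc μ.real {ω | L ≤ ∑ k ∈ Finset.range m, X k ω}
        ≤ Real.exp (-t * L) * mgf (X 0) μ t ^ m :=
          measureReal_sum_range_ge_le_exp_mul_mgf_pow hmeas hindep hident ht hint L m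
      _ ≤ Real.exp (-t * L) * Real.exp (m * a) := by
          gcongr; exact Real.pow_le_exp_mul_of_log_le (mgf_pos hint) hMa m
      _ ≤ Real.exp (-t * L) * Real.exp (t / 2 * L) := by
          gcongr _ * Real.exp ?_
          rw [← hra]
          exact mul_le_mul_of_nonneg_right hmr (by linarith)
      _ = Real.exp (-(t / 2 * L)) := by rw [← Real.exp_add]; ring_nf
  calc ∑ m ∈ Finset.range (⌊r⌋₊ + 1), μ.real {ω | L ≤ ∑ k ∈ Finset.range m, X k ω}
      ≤ (⌊r⌋₊ + 1 : ℕ) * Real.exp (-(t / 2 * L)) := by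
        simpa using Finset.sum_le_sum hterm
    _ ≤ (t / 2 * L + 1) * Real.exp (-(t / 2 * L)) := by
        gcongr; push_cast; linarith [Nat.floor_le hr]
    _ ≤ 2 * Real.exp (-(t / 4 * L)) := by
        convert Real.add_one_mul_exp_neg_le (t / 2 * L) using 4; ring

end ProbabilityTheory

theorem random_time_walk_tail_bound_general
    {Ω : Type*} [MeasurableSpace Ω] (μ : Measure Ω) [IsProbabilityMeasure μ]
    (X : ℕ → Ω → ℝ) (hmeas : ∀ i, Measurable (X i))
    (hindep : iIndepFun X μ)
    (hident : ∀ i, IdentDistrib (X i) (X 0) μ μ)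
    (hmgf : ∃ ε > 0, ∀ t : ℝ, |t| < ε → Integrable (fun ω => Real.exp (t * X 0 ω)) μ)
    (τ : ℝ → Ω → ℕ) (η k₁ : ℝ) (hη : 0 < η)
    (hτ : ∀ c ∈ Set.Ioo (0:ℝ) 1, ∀ t : ℝ, 0 ≤ t →
        (μ {ω | t < (τ c ω : ℝ)}).toReal ≤ k₁ * Real.exp (-η * t)) :
    ∃ k₂ > 0, ∃ s > 0, ∀ c ∈ Set.Ioo (0:ℝ) 1,
      (μ {ω | |Real.log c| < ∑ k ∈ Finset.range (τ c ω), X k ω}).toReal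
        ≤ k₂ * Real.exp (-s * |Real.log c|) := by
  obtain ⟨ε, hε, hmgf⟩ := hmgf
  set t := ε / 2
  have ht : 0 < t := by positivity
  have hint : Integrable (fun ω => Real.exp (t * X 0 ω)) μ :=
    hmgf t (by rw [abs_of_pos ht]; exact half_lt_self hε)
  have hk₁ : 0 ≤ k₁ := by
    simpa using measureReal_nonneg.trans (hτ (1 / 2) ⟨by norm_num, by norm_num⟩ 0 le_rfl)
  set a := max (Real.log (mgf (X 0) μ t)) 1
  set α := t / (2 * a)
  set s := min (η * α) (t / 4)
  refine ⟨k₁ + 2, by positivity, s, lt_min (by positivity) (by positivity), fun c hc => ?_⟩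
  set L := |Real.log c|
  have hL : 0 ≤ L := abs_nonneg _
  calc μ.real {ω | L < ∑ k ∈ Finset.range (τ c ω), X k ω}
      ≤ μ.real {ω | α * L < τ c ω}
          + ∑ m ∈ Finset.range (⌊α * L⌋₊ + 1), μ.real {ω | L ≤ ∑ k ∈ Finset.range m, X k ω} :=
        measureReal_lt_apply_random_time_le (fun n ω => ∑ k ∈ Finset.range n, X k ω) (τ c) L _
    _ ≤ k₁ * Real.exp (-η * (α * L)) + 2 * Real.exp (-(t / 4 * L)) :=
        add_le_add (hτ c hc _ (by positivity)) (sum_measureReal_sum_range_ge_le hmeas hindep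
          hident ht.le hint (le_max_right _ _) (le_max_left _ _) hL)
    _ ≤ k₁ * Real.exp (-s * L) + 2 * Real.exp (-s * L) := by
        gcongr k₁ * Real.exp ?_ + 2 * Real.exp ?_
        · nlinarith [min_le_left (η * α) (t / 4)]
        · nlinarith [min_le_right (η * α) (t / 4)]
    _ = (k₁ + 2) * Real.exp (-s * L) := by ring

/-- Tail bound for a positive-drift random walk evaluated at an exponentially-tailed
random time: if the i.i.d. increments have positive mean, MGF finite near `0` and an
exponentially decaying right tail, and `P(τ(c) > t) ≤ k₁ e^{−ηt}` with `η > 0`, then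
there are constants `k₂ > 0`, `s > 0` with
`P(S_{τ(c)} > |log c|) ≤ k₂ exp(−s |log c|) = k₂ c^s` for all `c ∈ (0,1)`. -/
theorem random_time_walk_tail_bound
    {Ω : Type*} [MeasurableSpace Ω] (μ : Measure Ω) [IsProbabilityMeasure μ]
    (X : ℕ → Ω → ℝ) (hmeas : ∀ i, Measurable (X i))
    (hindep : iIndepFun X μ)
    (hident : ∀ i, IdentDistrib (X i) (X 0) μ μ)
    (hint : Integrable (X 0) μ) (hmean : 0 < ∫ ω, X 0 ω ∂μ)
    (hmgf : ∃ ε > 0, ∀ t : ℝ, |t| < ε → Integrable (fun ω => Real.exp (t * X 0 ω)) μ)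
    (htail : ∃ C > 0, ∃ b > 0, ∀ x : ℝ, 0 < x →
        (μ {ω | x < X 0 ω}).toReal ≤ C * Real.exp (-b * x))
    (τ : ℝ → Ω → ℕ) (η k₁ : ℝ) (hη : 0 < η)
    (hτ : ∀ c ∈ Set.Ioo (0:ℝ) 1, ∀ t : ℝ, 0 ≤ t →
        (μ {ω | t < (τ c ω : ℝ)}).toReal ≤ k₁ * Real.exp (-η * t)) :
    ∃ k₂ > 0, ∃ s > 0, ∀ c ∈ Set.Ioo (0:ℝ) 1,
      (μ {ω | |Real.log c| < ∑ k ∈ Finset.range (τ c ω), X k ω}).toReal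
        ≤ k₂ * Real.exp (-s * |Real.log c|) :=
  random_time_walk_tail_bound_general μ X hmeas hindep hident hmgf τ η k₁ hη hτ
end
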